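/- In the diagonal setting, fix α ≥ 0 and β > 0 and let 𝒜 ⊆ D(A^{α+β}) be a set such that ‖A^β(u − v)‖_α ≤ M ‖u − v‖_α for all u,v ∈ 𝒜, for some M > 0. Then there exists an integer N (any N with λ_{N+1}^β > √2 M will do) such that ‖Q_N(u − v)‖_α ≤ ‖P_N(u − v)‖_α for all u,v ∈ 𝒜; in particular ‖u − v‖_α ≤ √2 ‖P_N(u − v)‖_α for all u,v ∈ 𝒜, so 𝒜 is contained in the graph over P_N H of a Lipschitz function. -/

import Mathlib

/-!
Expand in the Hilbert basis `w` with coefficients `c_j = ⟨u - v, w_j⟩` and split the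
`‖·‖_α`-norm into low modes `j ≤ N` (`P_N`) and high modes `j > N` (`Q_N`), so that
`‖u - v‖_α² = ‖P_N(u - v)‖_α² + ‖Q_N(u - v)‖_α²`. On the high modes `A^β` stretches the
`α`-norm by at least `λ_{N+1}^β`, so `λ_{N+1}^β ‖Q_N(u - v)‖_α ≤ ‖A^β(u - v)‖_α ≤ M ‖u - v‖_α`.
If the high part dominated the low part we would have `‖u - v‖_α < √2 ‖Q_N(u - v)‖_α`,
contradicting `λ_{N+1}^β > √2 M`. Such an `N` exists because `λ_j → ∞`.
-/

open scoped RealInnerProductSpace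

noncomputable section

variable {H : Type*} [NormedAddCommGroup H] [InnerProductSpace ℝ H]

/-- `A^α u = ∑_j λ_j^α ⟨u, w_j⟩ w_j` (fractional power of the diagonal operator). -/
def Apow (w : ℕ → H) (l : ℕ → ℝ) (α : ℝ) (u : H) : H :=
  ∑' j : ℕ, (l j ^ α * ⟪u, w j⟫) • w j

/-- The domain `D(A^α)`. -/
def Dom (w : ℕ → H) (l : ℕ → ℝ) (α : ℝ) : Set H :=
  {u | Summable fun j : ℕ => l j ^ (2 * α) * ⟪u, w j⟫ ^ 2}

/-- `P_n u = ∑_{j=1}^n ⟨u, w_j⟩ w_j` (here `w` is indexed from `0`, so we sum over `j < n`). -/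
def Pproj (w : ℕ → H) (n : ℕ) (u : H) : H :=
  ∑ j ∈ Finset.range n, ⟪u, w j⟫ • w j

/-- `Q_n u = u - P_n u`. -/
def Qproj (w : ℕ → H) (n : ℕ) (u : H) : H := u - Pproj w n u

namespace HilbertBasis

variable {ι : Type*} (b : HilbertBasis ι ℝ H)

theorem norm_sq_eq_tsum_inner_sq (x : H) : ‖x‖ ^ 2 = ∑' i, ⟪x, b i⟫ ^ 2 := by
  rw [← real_inner_self_eq_norm_sq, ← b.tsum_inner_mul_inner]
  simp_rw [sq, real_inner_comm x]

theorem inner_tsum_smul {a : ι → ℝ} (ha : Summable fun i => a i ^ 2) (k : ι) :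
    ⟪∑' i, a i • b i, b k⟫ = a k := by
  have hmem : Memℓp a 2 := memℓp_gen (by simpa using ha)
  rw [(b.hasSum_repr_symm ⟨a, hmem⟩).tsum_eq, real_inner_comm, ← b.repr_apply_apply,
    b.repr.apply_symm_apply]

end HilbertBasis

theorem rpow_mul_sq {x : ℝ} (hx : 0 ≤ x) (γ c : ℝ) : (x ^ γ * c) ^ 2 = x ^ (2 * γ) * c ^ 2 := by
  rw [mul_pow, mul_comm 2 γ, ← Real.rpow_mul_natCast hx, Nat.cast_ofNat]

theorem le_of_mul_le_mul_of_sq_eq_sq_add_sq {p q t L M : ℝ} (hp : 0 ≤ p) (ht : 0 ≤ t)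
    (hpqt : t ^ 2 = p ^ 2 + q ^ 2) (hL : 0 < L) (hML : Real.sqrt 2 * M < L)
    (hqt : L * q ≤ M * t) : q ≤ p := by
  by_contra! hpq
  have hq : 0 < q := hp.trans_lt hpq
  have ht_lt : t < Real.sqrt 2 * q := by
    rw [← sq_lt_sq₀ ht (by positivity), mul_pow, Real.sq_sqrt zero_le_two]
    nlinarith
  nlinarith [Real.sqrt_nonneg 2]

theorem le_sqrt_two_mul_of_sq_eq_sq_add_sq {p q t : ℝ} (hp : 0 ≤ p) (ht : 0 ≤ t)
    (hpqt : t ^ 2 = p ^ 2 + q ^ 2) (hq : 0 ≤ q) (hqp : q ≤ p) : t ≤ Real.sqrt 2 * p := by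
  rw [← sq_le_sq₀ ht (by positivity), mul_pow, Real.sq_sqrt zero_le_two]
  nlinarith

section

variable {w : ℕ → H} {l : ℕ → ℝ} {α β γ δ : ℝ} {x y : H}

theorem mem_Dom_iff (hl : ∀ j, 0 ≤ l j) :
    x ∈ Dom w l α ↔ Summable fun j => (l j ^ α * ⟪x, w j⟫) ^ 2 := by
  simp only [rpow_mul_sq (hl _)]
  rfl

theorem Dom_subset_Dom (hpos : ∀ j, 0 < l j) (hmono : Monotone l) (h : γ ≤ δ) :
    Dom w l δ ⊆ Dom w l γ := by
  intro x hx
  have hl j := (hpos j).le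
  refine Summable.of_nonneg_of_le (fun j => by have := hl j; positivity) (fun j => ?_)
    (hx.mul_left (l 0 ^ (2 * γ - 2 * δ)))
  have hle : l j ^ (2 * γ - 2 * δ) ≤ l 0 ^ (2 * γ - 2 * δ) :=
    Real.rpow_le_rpow_of_nonpos (hpos 0) (hmono (Nat.zero_le j)) (by linarith)
  calc l j ^ (2 * γ) * ⟪x, w j⟫ ^ 2
        = l j ^ (2 * γ - 2 * δ) * (l j ^ (2 * δ) * ⟪x, w j⟫ ^ 2) := by
        rw [← mul_assoc, ← Real.rpow_add (hpos j), sub_add_cancel]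
    _ ≤ l 0 ^ (2 * γ - 2 * δ) * (l j ^ (2 * δ) * ⟪x, w j⟫ ^ 2) := by
        have := hl j
        gcongr

theorem sub_mem_Dom (hl : ∀ j, 0 ≤ l j) (hx : x ∈ Dom w l α) (hy : y ∈ Dom w l α) :
    x - y ∈ Dom w l α := by
  refine Summable.of_nonneg_of_le (fun j => by have := hl j; positivity) (fun j => ?_)
    ((hx.mul_left 2).add (hy.mul_left 2))
  have hlj : 0 ≤ l j ^ (2 * α) := Real.rpow_nonneg (hl j) _
  rw [inner_sub_left]
  nlinarith [mul_nonneg hlj (sq_nonneg (⟪x, w j⟫ + ⟪y, w j⟫))]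

theorem mem_Dom_of_abs_inner_le (hl : ∀ j, 0 ≤ l j) (hx : x ∈ Dom w l α)
    (h : ∀ j, |⟪y, w j⟫| ≤ |⟪x, w j⟫|) : y ∈ Dom w l α := by
  refine Summable.of_nonneg_of_le (fun j => by have := hl j; positivity) (fun j => ?_) hx
  have := hl j
  gcongr 1
  exact sq_le_sq.mpr (h j)

theorem inner_Pproj (hw : Orthonormal ℝ w) (N k : ℕ) :
    ⟪Pproj w N x, w k⟫ = if k < N then ⟪x, w k⟫ else 0 := by
  simp [Pproj, sum_inner, real_inner_smul_left, orthonormal_iff_ite.mp hw]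

theorem inner_Qproj (hw : Orthonormal ℝ w) (N k : ℕ) :
    ⟪Qproj w N x, w k⟫ = if k < N then 0 else ⟪x, w k⟫ := by
  rw [Qproj, inner_sub_left, inner_Pproj hw]
  split_ifs <;> simp

end

section

variable (b : HilbertBasis ℕ ℝ H) {l : ℕ → ℝ} {α β : ℝ} {x : H}

theorem inner_Apow (hl : ∀ j, 0 ≤ l j) (hx : x ∈ Dom b l α) (k : ℕ) :
    ⟪Apow b l α x, b k⟫ = l k ^ α * ⟪x, b k⟫ :=
  b.inner_tsum_smul ((mem_Dom_iff hl).mp hx) k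

theorem norm_Apow_sq (hl : ∀ j, 0 ≤ l j) (hx : x ∈ Dom b l α) :
    ‖Apow b l α x‖ ^ 2 = ∑' j, (l j ^ α * ⟪x, b j⟫) ^ 2 := by
  simp only [b.norm_sq_eq_tsum_inner_sq, inner_Apow b hl hx]

theorem Apow_Apow (hpos : ∀ j, 0 < l j) (hx : x ∈ Dom b l β) :
    Apow b l α (Apow b l β x) = Apow b l (α + β) x := by
  refine tsum_congr fun j => ?_
  rw [inner_Apow b (fun j => (hpos j).le) hx, ← mul_assoc, ← Real.rpow_add (hpos j)]

theorem norm_Apow_sq_eq_add (hl : ∀ j, 0 ≤ l j) (hx : x ∈ Dom b l α) (N : ℕ) :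
    ‖Apow b l α x‖ ^ 2 = ‖Apow b l α (Pproj b N x)‖ ^ 2 + ‖Apow b l α (Qproj b N x)‖ ^ 2 := by
  have hP : Pproj b N x ∈ Dom b l α := mem_Dom_of_abs_inner_le hl hx fun j => by
    rw [inner_Pproj b.orthonormal]; split_ifs <;> simp
  have hQ : Qproj b N x ∈ Dom b l α := mem_Dom_of_abs_inner_le hl hx fun j => by
    rw [inner_Qproj b.orthonormal]; split_ifs <;> simp
  rw [norm_Apow_sq b hl hx, norm_Apow_sq b hl hP, norm_Apow_sq b hl hQ,
    ← ((mem_Dom_iff hl).mp hP).tsum_add ((mem_Dom_iff hl).mp hQ)]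
  refine tsum_congr fun j => ?_
  rw [inner_Pproj b.orthonormal, inner_Qproj b.orthonormal]
  split_ifs <;> simp

theorem rpow_mul_norm_Apow_Qproj_le (hpos : ∀ j, 0 < l j) (hmono : Monotone l) (hβ : 0 ≤ β)
    (hx : x ∈ Dom b l (α + β)) (N : ℕ) :
    l N ^ β * ‖Apow b l α (Qproj b N x)‖ ≤ ‖Apow b l (α + β) x‖ := by
  have hl j := (hpos j).le
  have hQ : Qproj b N x ∈ Dom b l α :=
    mem_Dom_of_abs_inner_le hl (Dom_subset_Dom hpos hmono (by linarith) hx) fun j => by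
      rw [inner_Qproj b.orthonormal]; split_ifs <;> simp
  rw [← sq_le_sq₀ (by have := hl N; positivity) (norm_nonneg _), mul_pow, norm_Apow_sq b hl hQ,
    norm_Apow_sq b hl hx, ← tsum_mul_left]
  refine (((mem_Dom_iff hl).mp hQ).mul_left _).tsum_le_tsum (fun j => ?_) ((mem_Dom_iff hl).mp hx)
  rw [inner_Qproj b.orthonormal]
  split_ifs with hj
  · simp only [mul_zero, zero_pow two_ne_zero]
    positivity
  · have hlN : l N ^ β ≤ l j ^ β :=
      Real.rpow_le_rpow (hl N) (hmono (not_lt.mp hj)) hβ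
    rw [Real.rpow_add (hpos j), mul_right_comm, mul_comm _ (l j ^ β), mul_pow (l j ^ β)]
    have := hl N
    gcongr

theorem norm_Apow_Qproj_le_norm_Apow_Pproj (hpos : ∀ j, 0 < l j) (hmono : Monotone l)
    (hα : 0 ≤ α) (hβ : 0 ≤ β) (hx : x ∈ Dom b l (α + β)) {M : ℝ}
    (hLip : ‖Apow b l α (Apow b l β x)‖ ≤ M * ‖Apow b l α x‖) {N : ℕ}
    (hN : Real.sqrt 2 * M < l N ^ β) :
    ‖Apow b l α (Qproj b N x)‖ ≤ ‖Apow b l α (Pproj b N x)‖ := by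
  have hl j := (hpos j).le
  refine le_of_mul_le_mul_of_sq_eq_sq_add_sq (norm_nonneg _) (norm_nonneg _)
    (norm_Apow_sq_eq_add b hl (Dom_subset_Dom hpos hmono (by linarith) hx) N)
    (Real.rpow_pos_of_pos (hpos N) β) hN ?_
  calc l N ^ β * ‖Apow b l α (Qproj b N x)‖ ≤ ‖Apow b l (α + β) x‖ :=
        rpow_mul_norm_Apow_Qproj_le b hpos hmono hβ hx N
    _ = ‖Apow b l α (Apow b l β x)‖ := by
        rw [Apow_Apow b hpos (Dom_subset_Dom hpos hmono (by linarith) hx)]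
    _ ≤ M * ‖Apow b l α x‖ := hLip

end

theorem statement5_general [CompleteSpace H] (w : ℕ → H) (l : ℕ → ℝ)
    (hw : Orthonormal ℝ w)
    (hspan : ⊤ ≤ (Submodule.span ℝ (Set.range w)).topologicalClosure)
    (hmono : Monotone l) (hpos : ∀ j, 0 < l j)
    (hlim : Filter.Tendsto l Filter.atTop Filter.atTop)
    (α β M : ℝ) (hα : 0 ≤ α) (hβ : 0 < β)
    (𝒜 : Set H) (hsub : 𝒜 ⊆ Dom w l (α + β))
    (hLipA : ∀ u ∈ 𝒜, ∀ v ∈ 𝒜,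
      ‖Apow w l α (Apow w l β (u - v))‖ ≤ M * ‖Apow w l α (u - v)‖) :
    (∃ N : ℕ, Real.sqrt 2 * M < l N ^ β) ∧
    ∀ N : ℕ, Real.sqrt 2 * M < l N ^ β →
      (∀ u ∈ 𝒜, ∀ v ∈ 𝒜,
        ‖Apow w l α (Qproj w N (u - v))‖ ≤ ‖Apow w l α (Pproj w N (u - v))‖) ∧
      (∀ u ∈ 𝒜, ∀ v ∈ 𝒜,
        ‖Apow w l α (u - v)‖ ≤ Real.sqrt 2 * ‖Apow w l α (Pproj w N (u - v))‖) := by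
  obtain ⟨b, rfl⟩ : ∃ b : HilbertBasis ℕ ℝ H, ⇑b = w := ⟨_, HilbertBasis.coe_mk hw hspan⟩
  have hl j := (hpos j).le
  have hmem {u v} (hu : u ∈ 𝒜) (hv : v ∈ 𝒜) : u - v ∈ Dom b l (α + β) :=
    sub_mem_Dom hl (hsub hu) (hsub hv)
  have hQP N (hN : Real.sqrt 2 * M < l N ^ β) u (hu : u ∈ 𝒜) v (hv : v ∈ 𝒜) :=
    norm_Apow_Qproj_le_norm_Apow_Pproj b hpos hmono hα hβ.le (hmem hu hv) (hLipA u hu v hv) hN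
  refine ⟨(((tendsto_rpow_atTop hβ).comp hlim).eventually_gt_atTop _).exists,
    fun N hN => ⟨hQP N hN, fun u hu v hv => ?_⟩⟩
  exact le_sqrt_two_mul_of_sq_eq_sq_add_sq (norm_nonneg _) (norm_nonneg _)
    (norm_Apow_sq_eq_add b hl (Dom_subset_Dom hpos hmono (by linarith) (hmem hu hv)) N)
    (norm_nonneg _) (hQP N hN u hu v hv)

/-- in the diagonal setting, if `A^β` is `M`-Lipschitz on `𝒜 ⊆ D(A^{α+β})` in
the `‖·‖_α` norm, then there exists `N` (indeed any `N` with `λ_{N+1}^β > √2 M`, which with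
`0`-based indexing reads `(l N)^β > √2 M`, will do) such that
`‖Q_N(u - v)‖_α ≤ ‖P_N(u - v)‖_α` and `‖u - v‖_α ≤ √2 ‖P_N(u - v)‖_α` for all `u, v ∈ 𝒜`. -/
theorem statement5 [CompleteSpace H] (w : ℕ → H) (l : ℕ → ℝ)
    (hw : Orthonormal ℝ w)
    (hspan : ⊤ ≤ (Submodule.span ℝ (Set.range w)).topologicalClosure)
    (hmono : Monotone l) (hpos : ∀ j, 0 < l j)
    (hlim : Filter.Tendsto l Filter.atTop Filter.atTop)
    (α β M : ℝ) (hα : 0 ≤ α) (hβ : 0 < β) (hM : 0 < M)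
    (𝒜 : Set H) (hsub : 𝒜 ⊆ Dom w l (α + β))
    (hLipA : ∀ u ∈ 𝒜, ∀ v ∈ 𝒜,
      ‖Apow w l α (Apow w l β (u - v))‖ ≤ M * ‖Apow w l α (u - v)‖) :
    (∃ N : ℕ, Real.sqrt 2 * M < l N ^ β) ∧
    ∀ N : ℕ, Real.sqrt 2 * M < l N ^ β →
      (∀ u ∈ 𝒜, ∀ v ∈ 𝒜,
        ‖Apow w l α (Qproj w N (u - v))‖ ≤ ‖Apow w l α (Pproj w N (u - v))‖) ∧
      (∀ u ∈ 𝒜, ∀ v ∈ 𝒜,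
        ‖Apow w l α (u - v)‖ ≤ Real.sqrt 2 * ‖Apow w l α (Pproj w N (u - v))‖) :=
  statement5_general w l hw hspan hmono hpos hlim α β M hα hβ 𝒜 hsub hLipA
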